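/- arXiv:1803.03868 — 2 statements merged into one kernel-verified Lean document; each statement's English description precedes it below -/
import Mathlib

section
/- For all i ≥ 1 and all y > 0: if ‖ ∑_{k≤i} ∑_{l≤i} (λ_k + y − λ_i)^{−1/2} (λ_l + y − λ_i)^{−1/2} P_k E P_l ‖∞² ≤ 1, then λ̂_i − λ_i ≥ −y. -/
open scoped BigOperators RealInnerProductSpace
open Filter

noncomputable def rankOne {H : Type*} [NormedAddCommGroup H] [InnerProductSpace ℝ H]
    (v : H) : H →L[ℝ] H := (innerSL ℝ v).smulRight v

/-!
Courant–Fischer, perturbatively. Since `i + 1` vectors `u 0, …, u i` are more than the `i`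
constraints `⟪uh j, x⟫ = 0` (`j < i`), some nonzero `x = ∑_{m ≤ i} b_m u_m` satisfies them, and
expanding `x` in the eigenbasis `uh` gives `⟪Σ̂ x, x⟫ ≤ λ̂_i ‖x‖²`. With
`D = ∑_{m ≤ i} (λ_m + y − λ_i) P_m` the operator in the hypothesis is `D^{-1/2} E D^{-1/2}`,
so for `z = D^{1/2} x` its norm bound gives
`⟪E x, x⟫ ≥ -‖z‖² = -⟪Σ x, x⟫ - (y - λ_i) ‖x‖²`, i.e. `⟪Σ̂ x, x⟫ ≥ (λ_i - y) ‖x‖²`.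
-/

section

variable {H ι : Type*} [NormedAddCommGroup H] [InnerProductSpace ℝ H]

lemma rankOne_apply (v x : H) : rankOne v x = ⟪v, x⟫ • v := rfl

lemma sum_sum_smul_rankOne_comp_comp (s : Finset ι) (u : ι → H) (w : ι → ℝ) (A : H →L[ℝ] H) :
    ∑ k ∈ s, ∑ l ∈ s, (w k * w l) • (rankOne (u k) ∘L A ∘L rankOne (u l)) =
      (∑ k ∈ s, w k • rankOne (u k)) ∘L A ∘L ∑ l ∈ s, w l • rankOne (u l) := by
  simp only [ContinuousLinearMap.finsetSum_comp, ContinuousLinearMap.comp_finsetSum,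
    ContinuousLinearMap.smul_comp, ContinuousLinearMap.comp_smul, Finset.smul_sum, smul_smul]
  rw [Finset.sum_comm]
  exact Finset.sum_congr rfl fun _ _ => Finset.sum_congr rfl fun _ _ => by rw [mul_comm]

lemma isSymmetric_sum_smul_rankOne (s : Finset ι) (u : ι → H) (w : ι → ℝ) :
    (∑ k ∈ s, w k • rankOne (u k) : H →L[ℝ] H).IsSymmetric := by
  intro x y
  simp only [ContinuousLinearMap.toLinearMap_sum, ContinuousLinearMap.toLinearMap_smul,
    LinearMap.sum_apply, LinearMap.smul_apply, ContinuousLinearMap.coe_coe, rankOne_apply,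
    sum_inner, inner_sum, real_inner_smul_left, real_inner_smul_right]
  exact Finset.sum_congr rfl fun k _ => by rw [real_inner_comm x]; ring

lemma Orthonormal.sum_smul_rankOne_apply {u : ι → H} (hu : Orthonormal ℝ u) (s : Finset ι)
    (w c : ι → ℝ) :
    (∑ k ∈ s, w k • rankOne (u k)) (∑ m ∈ s, c m • u m) = ∑ k ∈ s, (w k * c k) • u k := by
  simp only [sum_apply, smul_apply, rankOne_apply]
  exact Finset.sum_congr rfl fun k hk => by rw [hu.inner_right_sum c hk, smul_smul]

lemma Orthonormal.inner_apply_sum_smul_self {u : ι → H} (hu : Orthonormal ℝ u) (s : Finset ι)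
    (A : H →L[ℝ] H) (μ : ι → ℝ) (hA : ∀ m, A (u m) = μ m • u m) (c : ι → ℝ) :
    ⟪A (∑ m ∈ s, c m • u m), ∑ m ∈ s, c m • u m⟫ = ∑ m ∈ s, μ m * c m ^ 2 := by
  have : A (∑ m ∈ s, c m • u m) = ∑ m ∈ s, (μ m * c m) • u m := by
    simp only [map_sum, map_smul, hA, smul_smul, mul_comm]
  rw [this, hu.inner_sum]
  exact Finset.sum_congr rfl fun m _ => by simp only [conj_trivial]; ring

lemma Orthonormal.norm_sum_smul_sq {u : ι → H} (hu : Orthonormal ℝ u) (s : Finset ι)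
    (c : ι → ℝ) : ‖∑ m ∈ s, c m • u m‖ ^ 2 = ∑ m ∈ s, c m ^ 2 := by
  rw [← real_inner_self_eq_norm_sq, hu.inner_sum]
  exact Finset.sum_congr rfl fun m _ => by simp only [conj_trivial]; ring

lemma neg_norm_mul_norm_sq_le_inner_apply_self (A : H →L[ℝ] H) (z : H) :
    -(‖A‖ * ‖z‖ ^ 2) ≤ ⟪A z, z⟫ := by
  have := (abs_le.mp ((abs_real_inner_le_norm (A z) z).trans
    (mul_le_mul_of_nonneg_right (A.le_opNorm z) (norm_nonneg z)))).1
  linarith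

lemma HilbertBasis.inner_apply_self_le (b : HilbertBasis ι ℝ H) {A : H →L[ℝ] H}
    (hA : (A : H →ₗ[ℝ] H).IsSymmetric) {μ : ι → ℝ} (hAb : ∀ j, A (b j) = μ j • b j) {x : H}
    {c : ℝ} (hx : ∀ j, ⟪b j, x⟫ ≠ 0 → μ j ≤ c) : ⟪A x, x⟫ ≤ c * ‖x‖ ^ 2 := by
  have hcoef : ∀ j, ⟪A x, b j⟫ * ⟪b j, x⟫ = μ j * ⟪b j, x⟫ ^ 2 := fun j => by
    have hsymm := hA x (b j)
    simp only [ContinuousLinearMap.coe_coe] at hsymm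
    rw [hsymm, hAb, real_inner_smul_right, real_inner_comm]; ring
  have hnorm : ∀ j, ⟪x, b j⟫ * ⟪b j, x⟫ = ⟪b j, x⟫ ^ 2 := fun j => by
    rw [real_inner_comm]; ring
  have hsumA := b.summable_inner_mul_inner (A x) x
  have hsumx := b.summable_inner_mul_inner x x
  simp only [hcoef] at hsumA
  simp only [hnorm] at hsumx
  rw [← b.tsum_inner_mul_inner, ← real_inner_self_eq_norm_sq, ← b.tsum_inner_mul_inner,
    ← tsum_mul_left]
  simp only [hcoef, hnorm]
  refine hsumA.tsum_le_tsum (fun j => ?_) (hsumx.mul_left c)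
  by_cases hj : ⟪b j, x⟫ = 0
  · simp [hj]
  · exact mul_le_mul_of_nonneg_right (hx j hj) (sq_nonneg _)

lemma exists_inner_sum_smul_eq_zero_of_card_lt (s : Finset ι) (v : ι → H) {n : ℕ}
    (w : Fin n → H) (hs : n < s.card) :
    ∃ c : ι → ℝ, (∃ m ∈ s, c m ≠ 0) ∧ ∀ j, ⟪w j, ∑ m ∈ s, c m • v m⟫ = 0 := by
  classical
  let φ : (s → ℝ) →ₗ[ℝ] (Fin n → ℝ) :=
    LinearMap.pi fun j => (innerₛₗ ℝ (w j)).comp (Fintype.linearCombination ℝ (fun m : s => v m))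
  have hker : LinearMap.ker φ ≠ ⊥ := LinearMap.ker_ne_bot_of_finrank_lt (by simpa using hs)
  obtain ⟨a, ha, hane⟩ := Submodule.exists_mem_ne_zero_of_ne_bot hker
  obtain ⟨m, hm⟩ := Function.ne_iff.mp hane
  refine ⟨fun m => if h : m ∈ s then a ⟨m, h⟩ else 0, ⟨m, m.2, by simpa using hm⟩, fun j => ?_⟩
  have := congrFun (LinearMap.mem_ker.mp ha) j
  simp only [LinearMap.pi_apply, LinearMap.coe_comp, coe_innerₛₗ_apply, Function.comp_apply,
    Fintype.linearCombination_apply, Finset.univ_eq_attach, Pi.zero_apply, φ] at this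
  rw [← Finset.sum_coe_sort s]
  simpa using this

lemma Orthonormal.neg_sum_mul_sq_le_inner_apply_self {u : ι → H} (hu : Orthonormal ℝ u)
    {s : Finset ι} {d : ι → ℝ} (hd : ∀ m ∈ s, 0 < d m) {E : H →L[ℝ] H}
    (hE : ‖∑ k ∈ s, ∑ l ∈ s, ((√(d k))⁻¹ * (√(d l))⁻¹) •
      (rankOne (u k) ∘L E ∘L rankOne (u l))‖ ≤ 1) (b : ι → ℝ) :
    -∑ m ∈ s, d m * b m ^ 2 ≤ ⟪E (∑ m ∈ s, b m • u m), ∑ m ∈ s, b m • u m⟫ := by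
  set Q : H →L[ℝ] H := ∑ k ∈ s, (√(d k))⁻¹ • rankOne (u k)
  set z := ∑ m ∈ s, (√(d m) * b m) • u m
  have hQz : Q z = ∑ m ∈ s, b m • u m := by
    rw [hu.sum_smul_rankOne_apply]
    refine Finset.sum_congr rfl fun k hk => ?_
    rw [← mul_assoc, inv_mul_cancel₀ (Real.sqrt_pos.2 (hd k hk)).ne', one_mul]
  have hz : ‖z‖ ^ 2 = ∑ m ∈ s, d m * b m ^ 2 := by
    rw [hu.norm_sum_smul_sq]
    refine Finset.sum_congr rfl fun m hm => ?_
    rw [mul_pow, Real.sq_sqrt (hd m hm).le]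
  rw [sum_sum_smul_rankOne_comp_comp s u (fun k => (√(d k))⁻¹)] at hE
  calc -∑ m ∈ s, d m * b m ^ 2 ≤ -(‖Q ∘L E ∘L Q‖ * ‖z‖ ^ 2) := by
        rw [← hz]; exact neg_le_neg (mul_le_of_le_one_left (sq_nonneg _) hE)
    _ ≤ ⟪(Q ∘L E ∘L Q) z, z⟫ := neg_norm_mul_norm_sq_le_inner_apply_self _ z
    _ = ⟪E (∑ m ∈ s, b m • u m), ∑ m ∈ s, b m • u m⟫ := by
        rw [← hQz]; exact isSymmetric_sum_smul_rankOne s u _ (E (Q z)) z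

end

theorem stmt15_general
    {H : Type*} [NormedAddCommGroup H] [InnerProductSpace ℝ H] [CompleteSpace H]
    (u uh : HilbertBasis ℕ ℝ H)
    (lam lamh : ℕ → ℝ)
    (hlam_anti : ∀ i j, i ≤ j → lam j ≤ lam i)
    (hlamh_anti : ∀ i j, i ≤ j → lamh j ≤ lamh i)
    (T Th : H →L[ℝ] H)
    (hThsa : IsSelfAdjoint Th)
    (hT : ∀ i, T (u i) = lam i • u i)
    (hTh : ∀ i, Th (uh i) = lamh i • uh i)
    (i : ℕ) (y : ℝ) (hy : 0 < y)
    (hnorm : ‖∑ k ∈ Finset.range (i + 1), ∑ l ∈ Finset.range (i + 1),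
        ((Real.sqrt (lam k + y - lam i))⁻¹ * (Real.sqrt (lam l + y - lam i))⁻¹) •
          (rankOne (u k) ∘L (Th - T) ∘L rankOne (u l))‖ ^ 2 ≤ 1) :
    -y ≤ lamh i - lam i := by
  have hd : ∀ m ∈ Finset.range (i + 1), 0 < lam m + y - lam i := fun m hm => by
    linarith [hlam_anti m i (Nat.lt_succ_iff.mp (Finset.mem_range.mp hm))]
  obtain ⟨b, ⟨m, hm, hbm⟩, horth⟩ :=
    exists_inner_sum_smul_eq_zero_of_card_lt (Finset.range (i + 1)) u (fun j : Fin i => uh j)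
      (by simp)
  set x := ∑ m ∈ Finset.range (i + 1), b m • u m
  have hlower := u.orthonormal.neg_sum_mul_sq_le_inner_apply_self hd
    ((pow_le_one_iff_of_nonneg (norm_nonneg _) two_ne_zero).mp hnorm) b
  have hupper : ⟪Th x, x⟫ ≤ lamh i * ‖x‖ ^ 2 := by
    refine uh.inner_apply_self_le hThsa.isSymmetric hTh fun j hj => hlamh_anti i j ?_
    by_contra! hji
    exact hj (horth ⟨j, hji⟩)
  have hTx := u.orthonormal.inner_apply_sum_smul_self (Finset.range (i + 1)) T lam hT b
  have hx := u.orthonormal.norm_sum_smul_sq (Finset.range (i + 1)) b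
  have hxpos : 0 < ‖x‖ ^ 2 := hx ▸ Finset.sum_pos' (fun _ _ => sq_nonneg _) ⟨m, hm, by positivity⟩
  have hsplit : ⟪Th x, x⟫ = ⟪T x, x⟫ + ⟪(Th - T) x, x⟫ := by
    rw [sub_apply, inner_sub_left]; ring
  have hlin : ∑ m ∈ Finset.range (i + 1), lam m * b m ^ 2 -
      ∑ m ∈ Finset.range (i + 1), (lam m + y - lam i) * b m ^ 2 = (lam i - y) * ‖x‖ ^ 2 := by
    rw [hx, Finset.mul_sum, ← Finset.sum_sub_distrib]
    exact Finset.sum_congr rfl fun m _ => by ring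
  have hquad : (lam i - y) * ‖x‖ ^ 2 ≤ lamh i * ‖x‖ ^ 2 := by linarith
  linarith [le_of_mul_le_mul_right hquad hxpos]

/-- **Proposition 10 of Jirak–Wahl, Eq. (18).** For all `i` and `y > 0`: if
`‖∑_{k≤i} ∑_{l≤i} (λ_k+y−λ_i)^{-1/2} (λ_l+y−λ_i)^{-1/2} P_k E P_l‖∞² ≤ 1`, then
`λ̂_i − λ_i ≥ −y`. -/
theorem stmt15
    {H : Type*} [NormedAddCommGroup H] [InnerProductSpace ℝ H] [CompleteSpace H]
    (u uh : HilbertBasis ℕ ℝ H)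
    (lam lamh : ℕ → ℝ)
    (hlam_pos : ∀ i, 0 < lam i)
    (hlam_anti : ∀ i j, i ≤ j → lam j ≤ lam i)
    (hlam_to0 : Tendsto lam atTop (nhds 0))
    (hlamh_nonneg : ∀ i, 0 ≤ lamh i)
    (hlamh_anti : ∀ i j, i ≤ j → lamh j ≤ lamh i)
    (hlamh_to0 : Tendsto lamh atTop (nhds 0))
    (T Th : H →L[ℝ] H)
    (hTsa : IsSelfAdjoint T) (hThsa : IsSelfAdjoint Th)
    (hT : ∀ i, T (u i) = lam i • u i)
    (hTh : ∀ i, Th (uh i) = lamh i • uh i)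
    (i : ℕ) (y : ℝ) (hy : 0 < y)
    (hnorm : ‖∑ k ∈ Finset.range (i + 1), ∑ l ∈ Finset.range (i + 1),
        ((Real.sqrt (lam k + y - lam i))⁻¹ * (Real.sqrt (lam l + y - lam i))⁻¹) •
          (rankOne (u k) ∘L (Th - T) ∘L rankOne (u l))‖ ^ 2 ≤ 1) :
    -y ≤ lamh i - lam i :=
  stmt15_general u uh lam lamh hlam_anti hlamh_anti T Th hThsa hT hTh i y hy hnorm
end

section
/- Suppose sup_{j≥1} E|η_j|⁴ ≤ C_η for a constant C_η > 0. Then for any subsets I, J ⊆ ℕ, there is a constant C₂ > 0 depending only on C_η such that ( E ‖P_I E P_J‖₂ )² ≤ (C₂ / n) ∑_{i∈I} ∑_{j∈J} λ_i λ_j. -/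
/-!
The entry `⟪u i, (Σ̂ - Σ) u k⟫` is the centred empirical mean of the i.i.d. variables
`⟪u i, X_l⟫ ⟪u k, X_l⟫`, so its second moment is at most `E[⟪u i, X⟫² ⟪u k, X⟫²] / n`, and by
AM–GM together with the fourth-moment bound this is at most `λ_i λ_k C_η / n`. Summing over
`i ∈ I`, `k ∈ J` bounds `E ‖P_I (Σ̂ - Σ) P_J‖₂²`, and Jensen's inequality gives the claim with
`C₂ = C_η`. The Hilbert–Schmidt sums are handled in `ℝ≥0∞`, where no summability is needed.
-/

open scoped BigOperators RealInnerProductSpace ENNReal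
open Filter MeasureTheory ProbabilityTheory

noncomputable def hsNormSq {H : Type*} [NormedAddCommGroup H] [InnerProductSpace ℝ H]
    (u : ℕ → H) (T : H →L[ℝ] H) : ℝ := ∑' i, ‖T (u i)‖ ^ 2

noncomputable def hsNorm {H : Type*} [NormedAddCommGroup H] [InnerProductSpace ℝ H]
    (u : ℕ → H) (T : H →L[ℝ] H) : ℝ := Real.sqrt (hsNormSq u T)

/-- orthogonal projection onto the closed span of `{u i : i ∈ S}`, as an operator on `H` -/
noncomputable def projSet {H : Type*} [NormedAddCommGroup H] [InnerProductSpace ℝ H]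
    [CompleteSpace H] (u : ℕ → H) (S : Set ℕ) : H →L[ℝ] H :=
  haveI : CompleteSpace ((Submodule.span ℝ (u '' S)).topologicalClosure) :=
    (Submodule.isClosed_topologicalClosure _).completeSpace_coe
  ((Submodule.span ℝ (u '' S)).topologicalClosure).subtypeL ∘L
    Submodule.orthogonalProjectionOnto ((Submodule.span ℝ (u '' S)).topologicalClosure)

section Hilbert
variable {H : Type*} [NormedAddCommGroup H] [InnerProductSpace ℝ H]

lemma inner_smul_sum_rankOne_sub_apply {ι κ : Type*} [DecidableEq ι] [Fintype κ] {u : ι → H}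
    (hu : Orthonormal ℝ u) {lam : ι → ℝ} {T : H →L[ℝ] H} (hT : ∀ i, T (u i) = lam i • u i)
    (c : ℝ) (x : κ → H) (i k : ι) :
    ⟪u i, (c • ∑ l, rankOne (x l) - T) (u k)⟫ =
      c * ∑ l, ⟪u i, x l⟫ * ⟪u k, x l⟫ - if i = k then lam i else 0 := by
  have hTik : ⟪u i, T (u k)⟫ = if i = k then lam i else 0 := by
    rw [hT, inner_smul_right, orthonormal_iff_ite.mp hu]
    split_ifs with h
    · rw [h, mul_one]
    · rw [mul_zero]
  simp only [sub_apply, smul_apply, sum_apply, rankOne, ContinuousLinearMap.smulRight_apply,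
    innerSL_apply_apply, inner_sub_right, inner_smul_right, inner_sum, hTik, real_inner_comm (u k)]
  simp_rw [mul_comm]

lemma ofReal_hsNorm_sq_le (u : ℕ → H) (A : H →L[ℝ] H) :
    ENNReal.ofReal (hsNorm u A ^ 2) ≤ ∑' k, ENNReal.ofReal (‖A (u k)‖ ^ 2) := by
  rw [hsNorm, hsNormSq, Real.sq_sqrt (tsum_nonneg fun _ => sq_nonneg _)]
  by_cases hA : Summable fun k => ‖A (u k)‖ ^ 2
  · rw [ENNReal.ofReal_tsum_of_nonneg (fun _ => sq_nonneg _) hA]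
  · simp [tsum_eq_zero_of_not_summable hA]

variable [CompleteSpace H] (u : HilbertBasis ℕ ℝ H)

lemma projSet_apply_of_mem {S : Set ℕ} {k : ℕ} (hk : k ∈ S) : projSet u S (u k) = u k :=
  Submodule.starProjection_eq_self_iff.mpr <|
    Submodule.le_topologicalClosure _ (Submodule.subset_span ⟨k, hk, rfl⟩)

lemma projSet_apply_of_notMem {S : Set ℕ} {k : ℕ} (hk : k ∉ S) : projSet u S (u k) = 0 := by
  have hle : (Submodule.span ℝ (u '' S)).topologicalClosure ≤ (ℝ ∙ u k)ᗮ := by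
    refine Submodule.topologicalClosure_minimal _ ?_ (Submodule.isClosed_orthogonal _)
    rw [Submodule.span_le]
    rintro _ ⟨j, hj, rfl⟩
    exact Submodule.mem_orthogonal_singleton_iff_inner_left.2
      (u.orthonormal.2 fun h => hk (h ▸ hj))
  have horth : u k ∈ (Submodule.span ℝ (u '' S)).topologicalClosureᗮ :=
    (Submodule.isOrtho_comm.1 (Submodule.isOrtho_iff_le.2 hle)).le
      (Submodule.mem_span_singleton_self _)
  simp [projSet, Submodule.orthogonalProjectionOnto_apply_of_mem_orthogonal horth]

lemma inner_projSet (S : Set ℕ) (i : ℕ) (y : H) :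
    ⟪u i, projSet u S y⟫ = S.indicator (fun i => ⟪u i, y⟫) i := by
  have hsymm : ⟪u i, projSet u S y⟫ = ⟪projSet u S (u i), y⟫ :=
    (Submodule.inner_starProjection_left_eq_right _ (u i) y).symm
  by_cases hi : i ∈ S
  · rw [hsymm, projSet_apply_of_mem u hi, Set.indicator_of_mem hi]
  · rw [hsymm, projSet_apply_of_notMem u hi, Set.indicator_of_notMem hi, inner_zero_left]

lemma ofReal_norm_projSet_sq (S : Set ℕ) (y : H) :
    ENNReal.ofReal (‖projSet u S y‖ ^ 2) = ∑' i : S, ENNReal.ofReal (⟪u i, y⟫ ^ 2) := by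
  have hparseval : HasSum (fun i : S => ⟪u i, y⟫ ^ 2) (‖projSet u S y‖ ^ 2) := by
    rw [← Function.comp_def (fun i => ⟪u i, y⟫ ^ 2) Subtype.val, hasSum_subtype_iff_indicator,
      ← real_inner_self_eq_norm_sq]
    refine (u.hasSum_inner_mul_inner (projSet u S y) (projSet u S y)).congr_fun fun i => ?_
    rw [real_inner_comm, inner_projSet]
    by_cases hi : i ∈ S <;> simp [hi, sq]
  rw [← hparseval.tsum_eq, ENNReal.ofReal_tsum_of_nonneg (fun _ => sq_nonneg _)
    hparseval.summable]

lemma ofReal_hsNorm_projSet_comp_sq_le (A : H →L[ℝ] H) (I J : Set ℕ) :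
    ENNReal.ofReal (hsNorm u (projSet u I ∘L A ∘L projSet u J) ^ 2) ≤
      ∑' i : I, ∑' k : J, ENNReal.ofReal (⟪u i, A (u k)⟫ ^ 2) := by
  have hcol : (fun k => ENNReal.ofReal (‖(projSet u I ∘L A ∘L projSet u J) (u k)‖ ^ 2)) =
      J.indicator fun k => ENNReal.ofReal (‖projSet u I (A (u k))‖ ^ 2) := by
    ext k
    by_cases hk : k ∈ J
    · simp [projSet_apply_of_mem u hk, hk]
    · simp [projSet_apply_of_notMem u hk, hk]
  calc ENNReal.ofReal (hsNorm u (projSet u I ∘L A ∘L projSet u J) ^ 2)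
      ≤ ∑' k : J, ENNReal.ofReal (‖projSet u I (A (u k))‖ ^ 2) := by
        rw [tsum_subtype J fun k => ENNReal.ofReal (‖projSet u I (A (u k))‖ ^ 2), ← hcol]
        exact ofReal_hsNorm_sq_le u _
    _ = ∑' i : I, ∑' k : J, ENNReal.ofReal (⟪u i, A (u k)⟫ ^ 2) := by
        simp_rw [ofReal_norm_projSet_sq]
        exact ENNReal.tsum_comm

end Hilbert

lemma tsum_tsum_ofReal_mul_mul {ι : Type*} {f g : ι → ℝ} (hf : ∀ i, 0 ≤ f i) (hg : ∀ i, 0 ≤ g i)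
    (hfs : Summable f) (hgs : Summable g) (I J : Set ι) {c : ℝ} (hc : 0 ≤ c) :
    ∑' i : I, ∑' j : J, ENNReal.ofReal (c * (f i * g j)) =
      ENNReal.ofReal (c * ∑' i : I, ∑' j : J, f i * g j) := by
  simp_rw [ENNReal.ofReal_mul hc, ENNReal.ofReal_mul (hf _), ENNReal.tsum_mul_left,
    ENNReal.tsum_mul_right, tsum_mul_left, tsum_mul_right,
    ← ENNReal.ofReal_tsum_of_nonneg (fun i : I => hf i) (hfs.subtype I),
    ← ENNReal.ofReal_tsum_of_nonneg (fun j : J => hg j) (hgs.subtype J),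
    ENNReal.ofReal_mul (tsum_nonneg fun i : I => hf i)]

lemma abs_inv_sqrt_mul_pow_four {a : ℝ} (ha : 0 ≤ a) (x : ℝ) :
    |(√a)⁻¹ * x| ^ 4 = (x ^ 2 / a) ^ 2 := by
  rw [show (4 : ℕ) = 2 * 2 from rfl, pow_mul, sq_abs, mul_pow, inv_pow, Real.sq_sqrt ha,
    inv_mul_eq_div]

lemma sq_mul_le_half_mul_add_pow_four {a b : ℝ} (ha : 0 < a) (hb : 0 < b) (x y : ℝ) :
    (x * y) ^ 2 ≤ a * b / 2 * (|(√a)⁻¹ * x| ^ 4 + |(√b)⁻¹ * y| ^ 4) := by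
  rw [abs_inv_sqrt_mul_pow_four ha.le, abs_inv_sqrt_mul_pow_four hb.le,
    show (x * y) ^ 2 = a * b * ((x ^ 2 / a) * (y ^ 2 / b)) by field_simp]
  have hamgm := two_mul_le_add_sq (x ^ 2 / a) (y ^ 2 / b)
  have hab : 0 < a * b := mul_pos ha hb
  nlinarith

section Probability
variable {Ω : Type*} [MeasurableSpace Ω] {P : Measure Ω}

lemma lintegral_sq_mul_le {f g : Ω → ℝ} (hf : AEMeasurable f P) {a b C : ℝ} (ha : 0 < a)
    (hb : 0 < b) (hC : 0 ≤ C)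
    (hf4 : ∫⁻ ω, ENNReal.ofReal (|(√a)⁻¹ * f ω| ^ 4) ∂P ≤ ENNReal.ofReal C)
    (hg4 : ∫⁻ ω, ENNReal.ofReal (|(√b)⁻¹ * g ω| ^ 4) ∂P ≤ ENNReal.ofReal C) :
    ∫⁻ ω, ENNReal.ofReal ((f ω * g ω) ^ 2) ∂P ≤ ENNReal.ofReal (a * b * C) :=
  calc ∫⁻ ω, ENNReal.ofReal ((f ω * g ω) ^ 2) ∂P
      ≤ ∫⁻ ω, ENNReal.ofReal (a * b / 2) * (ENNReal.ofReal (|(√a)⁻¹ * f ω| ^ 4) +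
          ENNReal.ofReal (|(√b)⁻¹ * g ω| ^ 4)) ∂P := by
        refine lintegral_mono fun ω => ?_
        rw [← ENNReal.ofReal_add (by positivity) (by positivity),
          ← ENNReal.ofReal_mul (by positivity)]
        exact ENNReal.ofReal_le_ofReal (sq_mul_le_half_mul_add_pow_four ha hb _ _)
    _ ≤ ENNReal.ofReal (a * b / 2) * (ENNReal.ofReal C + ENNReal.ofReal C) := by
        rw [lintegral_const_mul' _ _ ENNReal.ofReal_ne_top, lintegral_add_left' (by fun_prop)]
        gcongr
    _ = ENNReal.ofReal (a * b * C) := by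
        rw [← ENNReal.ofReal_add hC hC, ← ENNReal.ofReal_mul (by positivity)]
        ring_nf

lemma memLp_two_of_lintegral_ofReal_sq_ne_top {f : Ω → ℝ} (hf : AEStronglyMeasurable f P)
    (h : ∫⁻ ω, ENNReal.ofReal (f ω ^ 2) ∂P ≠ ∞) : MemLp f 2 P :=
  (memLp_two_iff_integrable_sq hf).2 <|
    (lintegral_ofReal_ne_top_iff_integrable (hf.pow 2) (ae_of_all _ fun _ => sq_nonneg _)).1 h

lemma variance_average {n : ℕ} {Y : Ω → ℝ} {Ys : Fin n → Ω → ℝ} (hY : MemLp Y 2 P)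
    (hind : iIndepFun Ys P) (hid : ∀ l, IdentDistrib (Ys l) Y P P) :
    Var[fun ω => (n : ℝ)⁻¹ * ∑ l, Ys l ω; P] = Var[Y; P] / n := by
  have hmem : ∀ l, MemLp (Ys l) 2 P := fun l => (hid l).memLp_iff.2 hY
  have hsum : Var[∑ l, Ys l; P] = n * Var[Y; P] := by
    rw [IndepFun.variance_sum (fun l _ => hmem l) fun l _ l' _ h => hind.indepFun h]
    simp [fun l => (hid l).variance_eq]
  rw [variance_const_mul, ← Finset.sum_fn, hsum]
  rcases eq_or_ne (n : ℝ) 0 with hn | hn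
  · simp [hn]
  · field_simp

variable [IsProbabilityMeasure P]

lemma sq_integral_le_of_lintegral_sq_le {f : Ω → ℝ} {B : ℝ} (hB : 0 ≤ B)
    (h : ∫⁻ ω, ENNReal.ofReal (f ω ^ 2) ∂P ≤ ENNReal.ofReal B) :
    (∫ ω, f ω ∂P) ^ 2 ≤ B := by
  by_cases hf : Integrable f P
  swap
  · simpa [integral_undef hf] using hB
  have hmem : MemLp f 2 P :=
    memLp_two_of_lintegral_ofReal_sq_ne_top hf.1 (ne_top_of_le_ne_top ENNReal.ofReal_ne_top h)
  calc (∫ ω, f ω ∂P) ^ 2 ≤ ∫ ω, f ω ^ 2 ∂P := by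
        simpa [variance_eq_sub hmem] using variance_nonneg f P
    _ ≤ B := by
        rw [← ENNReal.ofReal_le_ofReal_iff hB, ofReal_integral_eq_lintegral_ofReal
          hmem.integrable_sq (ae_of_all _ fun ω => sq_nonneg _)]
        exact h

lemma lintegral_sq_average_sub_integral_le {n : ℕ} (hn : n ≠ 0) {Y : Ω → ℝ}
    {Ys : Fin n → Ω → ℝ} (hY : MemLp Y 2 P) (hind : iIndepFun Ys P)
    (hid : ∀ l, IdentDistrib (Ys l) Y P P) :
    ∫⁻ ω, ENNReal.ofReal (((n : ℝ)⁻¹ * ∑ l, Ys l ω - ∫ ω, Y ω ∂P) ^ 2) ∂P ≤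
      (∫⁻ ω, ENNReal.ofReal (Y ω ^ 2) ∂P) / n := by
  have hmem : ∀ l, MemLp (Ys l) 2 P := fun l => (hid l).memLp_iff.2 hY
  have hmean : ∫ ω, (n : ℝ)⁻¹ * ∑ l, Ys l ω ∂P = ∫ ω, Y ω ∂P := by
    rw [integral_const_mul, integral_finsetSum _ fun l _ => (hmem l).integrable one_le_two]
    simp [fun l => (hid l).integral_eq, hn]
  rw [← hmean, ← evariance_eq_lintegral_ofReal,
    ← ((memLp_finsetSum _ fun l _ => hmem l).const_mul _).ofReal_variance_eq,
    variance_average hY hind hid,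
    ← ofReal_integral_eq_lintegral_ofReal hY.integrable_sq (ae_of_all _ fun ω => sq_nonneg _),
    ENNReal.ofReal_div_of_pos (by positivity), ENNReal.ofReal_natCast]
  gcongr
  exact variance_le_expectation_sq hY.1

lemma lintegral_sq_empirical_inner_mul_inner_sub_le {H : Type*} [NormedAddCommGroup H]
    [InnerProductSpace ℝ H] [MeasurableSpace H] [BorelSpace H] {n : ℕ} (hn : n ≠ 0)
    {X : Ω → H} (hX : Measurable X) {Xl : Fin n → Ω → H} (hind : iIndepFun Xl P)
    (hid : ∀ l, IdentDistrib (Xl l) X P P) {v w : H} {a b C : ℝ} (ha : 0 < a) (hb : 0 < b)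
    (hC : 0 ≤ C) (hv : ∫⁻ ω, ENNReal.ofReal (|(√a)⁻¹ * ⟪v, X ω⟫| ^ 4) ∂P ≤ ENNReal.ofReal C)
    (hw : ∫⁻ ω, ENNReal.ofReal (|(√b)⁻¹ * ⟪w, X ω⟫| ^ 4) ∂P ≤ ENNReal.ofReal C) :
    ∫⁻ ω, ENNReal.ofReal (((n : ℝ)⁻¹ * ∑ l, ⟪v, Xl l ω⟫ * ⟪w, Xl l ω⟫ -
        ∫ ω, ⟪v, X ω⟫ * ⟪w, X ω⟫ ∂P) ^ 2) ∂P ≤ ENNReal.ofReal (C / n * (a * b)) := by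
  set g : H → ℝ := fun x => ⟪v, x⟫ * ⟪w, x⟫
  have hg : Measurable g := by fun_prop
  have hgX : ∫⁻ ω, ENNReal.ofReal (g (X ω) ^ 2) ∂P ≤ ENNReal.ofReal (a * b * C) :=
    lintegral_sq_mul_le (by fun_prop) ha hb hC hv hw
  calc ∫⁻ ω, ENNReal.ofReal (((n : ℝ)⁻¹ * ∑ l, g (Xl l ω) - ∫ ω, g (X ω) ∂P) ^ 2) ∂P
      ≤ (∫⁻ ω, ENNReal.ofReal (g (X ω) ^ 2) ∂P) / n :=
        lintegral_sq_average_sub_integral_le hn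
          (memLp_two_of_lintegral_ofReal_sq_ne_top (hg.comp hX).aestronglyMeasurable
            (ne_top_of_le_ne_top ENNReal.ofReal_ne_top hgX))
          (hind.comp _ fun _ => hg) fun l => (hid l).comp hg
    _ ≤ ENNReal.ofReal (a * b * C) / n := by gcongr
    _ = ENNReal.ofReal (C / n * (a * b)) := by
        rw [← ENNReal.ofReal_natCast, ← ENNReal.ofReal_div_of_pos (by positivity)]
        ring_nf

end Probability

/-- **Expectation bound from the proof of Lemma 7 of Jirak–Wahl:**
`(E ‖P_I E P_J‖₂)² ≤ (C₂/n) ∑_{i∈I} ∑_{j∈J} λ_i λ_j` under a uniform fourth moment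
bound on the Karhunen–Loève coefficients. -/
theorem stmt18 (Cη : ℝ) (hCη : 0 < Cη) :
    ∃ C₂ : ℝ, 0 < C₂ ∧
      ∀ (H : Type*) [NormedAddCommGroup H] [InnerProductSpace ℝ H] [CompleteSpace H]
        [MeasurableSpace H] [BorelSpace H]
        (Ω : Type*) (_ : MeasurableSpace Ω) (P : Measure Ω), IsProbabilityMeasure P →
      ∀ (X : Ω → H), Measurable X → Integrable X P → (∫ ω, X ω ∂P) = 0 →
        Integrable (fun ω => ‖X ω‖ ^ 2) P →
      ∀ (u : HilbertBasis ℕ ℝ H) (lam : ℕ → ℝ),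
        (∀ i, 0 < lam i) → (∀ i j, i ≤ j → lam j ≤ lam i) → Summable lam →
        (∀ i j, (∫ ω, ⟪u i, X ω⟫ * ⟪u j, X ω⟫ ∂P) = if i = j then lam i else 0) →
        (∀ j, (∫⁻ ω, ENNReal.ofReal (|(Real.sqrt (lam j))⁻¹ * ⟪u j, X ω⟫| ^ 4) ∂P) ≤
          ENNReal.ofReal Cη) →
      ∀ (T : H →L[ℝ] H), IsSelfAdjoint T → (∀ i, T (u i) = lam i • u i) →
      ∀ (n : ℕ), 0 < n →
      ∀ (Xl : Fin n → Ω → H), (∀ l, Measurable (Xl l)) →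
        iIndepFun Xl P →
        (∀ l, IdentDistrib (Xl l) X P P) →
      ∀ (I J : Set ℕ),
        (∫ ω, hsNorm u (projSet u I ∘L
            (((n : ℝ)⁻¹ • ∑ l : Fin n, rankOne (Xl l ω)) - T) ∘L projSet u J) ∂P) ^ 2 ≤
          C₂ / n * ∑' i : I, ∑' j : J, lam (i : ℕ) * lam (j : ℕ) := by
  refine ⟨Cη, hCη, ?_⟩
  intro H _ _ _ _ _ Ω _ P _ X hX _ _ _ u lam hlam _ hsum hcov h4 T _ hT n hn Xl _ hind hid I J
  set A : Ω → H →L[ℝ] H := fun ω => (n : ℝ)⁻¹ • ∑ l, rankOne (Xl l ω) - T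
  have hA : ∀ ω i k, ⟪u i, A ω (u k)⟫ =
      (n : ℝ)⁻¹ * ∑ l, ⟪u i, Xl l ω⟫ * ⟪u k, Xl l ω⟫ - if i = k then lam i else 0 :=
    fun ω => inner_smul_sum_rankOne_sub_apply u.orthonormal hT _ _
  have hentry : ∀ i k, ∫⁻ ω, ENNReal.ofReal (⟪u i, A ω (u k)⟫ ^ 2) ∂P ≤
      ENNReal.ofReal (Cη / n * (lam i * lam k)) := by
    intro i k
    simp_rw [hA, ← hcov]
    exact lintegral_sq_empirical_inner_mul_inner_sub_le hn.ne' hX hind hid (hlam i) (hlam k)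
      hCη.le (h4 i) (h4 k)
  have hmeas : ∀ i k, Measurable fun ω => ENNReal.ofReal (⟪u i, A ω (u k)⟫ ^ 2) := by
    simp_rw [hA]
    fun_prop
  refine sq_integral_le_of_lintegral_sq_le
    (mul_nonneg (by positivity) (tsum_nonneg fun i => tsum_nonneg fun j =>
      mul_nonneg (hlam _).le (hlam _).le)) ?_
  calc ∫⁻ ω, ENNReal.ofReal (hsNorm u (projSet u I ∘L A ω ∘L projSet u J) ^ 2) ∂P
      ≤ ∫⁻ ω, ∑' i : I, ∑' k : J, ENNReal.ofReal (⟪u i, A ω (u k)⟫ ^ 2) ∂P :=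
        lintegral_mono fun ω => ofReal_hsNorm_projSet_comp_sq_le u (A ω) I J
    _ = ∑' i : I, ∑' k : J, ∫⁻ ω, ENNReal.ofReal (⟪u i, A ω (u k)⟫ ^ 2) ∂P := by
        rw [lintegral_tsum fun i : I => (Measurable.tsum fun k : J => hmeas i k).aemeasurable]
        exact tsum_congr fun i => lintegral_tsum fun k => (hmeas i k).aemeasurable
    _ ≤ ∑' i : I, ∑' k : J, ENNReal.ofReal (Cη / n * (lam i * lam k)) :=
        ENNReal.tsum_le_tsum fun i => ENNReal.tsum_le_tsum fun k => hentry i k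
    _ = ENNReal.ofReal (Cη / n * ∑' i : I, ∑' j : J, lam i * lam j) :=
        tsum_tsum_ofReal_mul_mul (fun i => (hlam i).le) (fun i => (hlam i).le) hsum hsum I J
          (by positivity)
end
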